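/- Let Q and T be strings and let c = |LCS(Q,T)|. Then there exists a sequence of MEMs (x_1,i_1,κ_1), ..., (x_c,i_c,κ_c) (not necessarily distinct) and offsets δ_1,...,δ_c with 0 ≤ δ_l < κ_l such that the positions y_l = x_l + δ_l are strictly increasing in Q, the positions j_l = i_l + δ_l are strictly increasing in T, and Q[y_l] = T[j_l] for all l. -/
import Mathlib


variable {α : Type*}

/-- `(x, i, κ)` is an exact match between strings `Q` and `T` (0-indexed):
`Q[x..x+κ-1] = T[i..i+κ-1]`. -/
def IsExactMatch (Q T : List α) (x i κ : ℕ) : Prop :=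
  1 ≤ κ ∧ x + κ ≤ Q.length ∧ i + κ ≤ T.length ∧
    ∀ d < κ, Q[x + d]? = T[i + d]?

/-- `(x, i, κ)` is a maximal exact match (MEM): an exact match that cannot be
extended to the left nor to the right. -/
def IsMEM (Q T : List α) (x i κ : ℕ) : Prop :=
  IsExactMatch Q T x i κ ∧
    (x = 0 ∨ i = 0 ∨ Q[x - 1]? ≠ T[i - 1]?) ∧
    (x + κ = Q.length ∨ i + κ = T.length ∨ Q[x + κ]? ≠ T[i + κ]?)

/-- Anchor `(x, i, κ)` supports the character match `(y, j)` at the same offset. -/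
def Supports (x i κ y j : ℕ) : Prop :=
  x ≤ y ∧ y < x + κ ∧ i ≤ j ∧ j < i + κ ∧ y - x = j - i

/-- `ys, js` exhibit a common subsequence of `Q` and `T` of length `c`. -/
def IsCommonSubseq (Q T : List α) (c : ℕ) (ys js : Fin c → ℕ) : Prop :=
  StrictMono ys ∧ StrictMono js ∧
    ∀ l, ys l < Q.length ∧ js l < T.length ∧ Q[ys l]? = T[js l]?

/-- There is a common subsequence of length `c` each of whose character matches is
supported by some anchor of `A` at the same offset. -/
def IsRestrictedCS (A : Set (ℕ × ℕ × ℕ)) (Q T : List α) (c : ℕ) : Prop :=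
  ∃ ys js : Fin c → ℕ, IsCommonSubseq Q T c ys js ∧
    ∀ l, ∃ m ∈ A, Supports m.1 m.2.1 m.2.2 (ys l) (js l)

open Classical in
lemma exists_MEM_support (Q T : List α) (y j : ℕ) (hy : y < Q.length)
    (hj : j < T.length) (h : Q[y]? = T[j]?) :
    ∃ x i κ δ, IsMEM Q T x i κ ∧ δ < κ ∧ x + δ = y ∧ i + δ = j := by
  set P : ℕ → Prop := fun a => a ≤ y ∧ a ≤ j ∧ ∀ d ≤ a, Q[y - d]? = T[j - d]? with hP
  set R : ℕ → Prop := fun b => y + b < Q.length ∧ j + b < T.length ∧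
      ∀ d ≤ b, Q[y + d]? = T[j + d]? with hR
  have hP0 : P 0 := ⟨Nat.zero_le _, Nat.zero_le _, fun d hd => by
    simp only [Nat.le_zero] at hd; simpa [hd] using h⟩
  have hR0 : R 0 := ⟨by simpa using hy, by simpa using hj, fun d hd => by
    simp only [Nat.le_zero] at hd; simpa [hd] using h⟩
  set a := Nat.findGreatest P (min y j) with ha
  set b := Nat.findGreatest R Q.length with hb
  have hPa : P a := Nat.findGreatest_spec (Nat.zero_le _) hP0
  have hRb : R b := Nat.findGreatest_spec (Nat.zero_le _) hR0
  obtain ⟨hay, haj, hmatchL⟩ := hPa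
  obtain ⟨hbQ, hbT, hmatchR⟩ := hRb
  refine ⟨y - a, j - a, a + b + 1, a, ⟨⟨Nat.le_add_left _ _, by omega, by omega, ?_⟩,
      ?_, ?_⟩, by omega, by omega, by omega⟩
  · intro d hd
    rcases le_or_gt d a with hda | hda
    · have h1 : y - a + d = y - (a - d) := by omega
      have h2 : j - a + d = j - (a - d) := by omega
      rw [h1, h2]; exact hmatchL _ (by omega)
    · have h1 : y - a + d = y + (d - a) := by omega
      have h2 : j - a + d = j + (d - a) := by omega
      rw [h1, h2]; exact hmatchR _ (by omega)
  · by_contra hcon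
    push_neg at hcon
    obtain ⟨hx0, hi0, heq⟩ := hcon
    have h1 : y - a - 1 = y - (a + 1) := by omega
    have h2 : j - a - 1 = j - (a + 1) := by omega
    rw [h1, h2] at heq
    have hPsucc : P (a + 1) := by
      refine ⟨by omega, by omega, fun d hd => ?_⟩
      rcases Nat.lt_or_ge d (a + 1) with hd' | hd'
      · exact hmatchL _ (by omega)
      · have : d = a + 1 := by omega
        rw [this]; exact heq
    have := Nat.le_findGreatest (by omega : a + 1 ≤ min y j) hPsucc
    omega
  · by_contra hcon
    push_neg at hcon
    obtain ⟨hx0, hi0, heq⟩ := hcon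
    have hxQ : y + b + 1 < Q.length := by omega
    have hiT : j + b + 1 < T.length := by omega
    have h1 : y - a + (a + b + 1) = y + (b + 1) := by omega
    have h2 : j - a + (a + b + 1) = j + (b + 1) := by omega
    rw [h1, h2] at heq
    have hRsucc : R (b + 1) := by
      refine ⟨by omega, by omega, fun d hd => ?_⟩
      rcases Nat.lt_or_ge d (b + 1) with hd' | hd'
      · exact hmatchR _ (by omega)
      · have : d = b + 1 := by omega
        rw [this]; exact heq
    have := Nat.le_findGreatest (by omega : b + 1 ≤ Q.length) hRsucc
    omega

/-- Any LCS of `Q` and `T` (of length `c`, the greatest common-subsequence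
length) is fully supported, character by character at matching offsets, by MEMs:
there are MEMs `(x_l, i_l, κ_l)` and offsets `δ_l < κ_l` with `y_l = x_l + δ_l`
strictly increasing, `j_l = i_l + δ_l` strictly increasing, and `Q[y_l] = T[j_l]`. -/

theorem LCS_supported_by_MEMs (Q T : List α) (c : ℕ)
    (hc : IsGreatest {n | ∃ ys js : Fin n → ℕ, IsCommonSubseq Q T n ys js} c) :
    ∃ (mem : Fin c → ℕ × ℕ × ℕ) (δ : Fin c → ℕ),
      (∀ l, IsMEM Q T (mem l).1 (mem l).2.1 (mem l).2.2) ∧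
      (∀ l, δ l < (mem l).2.2) ∧
      (StrictMono fun l => (mem l).1 + δ l) ∧
      (StrictMono fun l => (mem l).2.1 + δ l) ∧
      ∀ l, Q[(mem l).1 + δ l]? = T[(mem l).2.1 + δ l]? := by
  obtain ⟨ys, js, hmonoy, hmonoj, hchar⟩ := hc.1
  choose x i κ δ hmem hδ hx hi using fun l =>
    exists_MEM_support Q T (ys l) (js l) (hchar l).1 (hchar l).2.1 (hchar l).2.2
  refine ⟨fun l => (x l, i l, κ l), δ, hmem, hδ, ?_, ?_, ?_⟩
  · intro l m hlm
    simpa only [hx] using hmonoy hlm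
  · intro l m hlm
    simpa only [hi] using hmonoj hlm
  · intro l
    simp only [hx, hi]
    exact (hchar l).2.2
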